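/- Let structure constants C^C_{A_1...A_n} satisfy the generalized Jacobi condition ε^{B_1...B_{2n−1}}_{A_1...A_{2n−1}} C^C_{B_1...B_n} C^D_{C B_{n+1}...B_{2n−1}} = 0, and let K^γ_{αβ} be the structure constants of a finite commutative semigroup (so K^γ_{α_1...α_n} := composition via associativity is totally symmetric). Then the expanded structure constants C^{(C,γ)}_{(A_1,α_1)...(A_n,α_n)} = K^γ_{α_1...α_n} C^C_{A_1...A_n} also satisfy the generalized Jacobi condition. -/

import Mathlib

/-!
Writing the generalized Kronecker delta as a signed sum over permutations, the Jacobi sum becomes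
`∑_σ sign σ · J(A ∘ σ, D)` with `J` the unantisymmetrized contraction. For the expanded constants the
sum over the intermediate semigroup index in `J` collapses by associativity, leaving the selector
`K^δ_{α_σ(1)...α_σ(2n-1)}` times the contraction for `C`. By commutativity the selector does not
depend on `σ`, so it factors out of the antisymmetrized sum, which vanishes by the Jacobi condition
for `C`.
-/

/-- Generalized Kronecker delta `ε^{B}_{A}` on r-tuples of indices. -/
def gdelta {ι : Type*} [DecidableEq ι] {r : ℕ} (A B : Fin r → ι) : ℤ :=
  ∑ σ : Equiv.Perm (Fin r), (Equiv.Perm.sign σ : ℤ) *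
    ∏ k, (if A (σ k) = B k then 1 else 0)

/-- n-fold product in a (possibly non-unital) multiplicative structure. -/
def sprod {S : Type*} [Mul S] {m : ℕ} (l : Fin (m + 1) → S) : S :=
  (List.ofFn fun j : Fin m => l j.succ).foldl (· * ·) (l 0)

/-- Generalized Jacobi condition on structure constants of an (m+1)-bracket:
`ε^{B_1...B_{2n-1}}_{A_1...A_{2n-1}} C^c_{B_1...B_n} C^D_{c B_{n+1}...B_{2n-1}} = 0`. -/
def GJC {ι R : Type*} [Fintype ι] [DecidableEq ι] [CommRing R] {m : ℕ}
    (C : (Fin (m + 1) → ι) → ι → R) : Prop :=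
  ∀ (A : Fin (2 * m + 1) → ι) (D : ι),
    ∑ B : Fin (2 * m + 1) → ι, ∑ c : ι,
      (gdelta A B : R) * C (fun j => B (Fin.castLE (by omega) j)) c *
        C (Fin.cons c fun j : Fin m => B ⟨m + 1 + j.1, by have := j.isLt; omega⟩) D = 0

open Finset

lemma WithOne.coe_foldl_mul {S : Type*} [Semigroup S] (L : List S) (x : S) :
    ((L.foldl (· * ·) x : S) : WithOne S) = x * (L.map ((↑) : S → WithOne S)).prod := by
  induction L generalizing x with
  | nil => simp
  | cons a L ih => simp [ih, mul_assoc]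

lemma WithOne.coe_sprod {S : Type*} [Semigroup S] {m : ℕ} (l : Fin (m + 1) → S) :
    ((sprod l : S) : WithOne S) = (List.ofFn fun k => (l k : WithOne S)).prod := by
  rw [sprod, WithOne.coe_foldl_mul, List.map_ofFn, List.ofFn_succ, List.prod_cons]
  rfl

lemma sprod_cons_sprod {S : Type*} [Semigroup S] {m : ℕ} (α : Fin (2 * m + 1) → S) :
    sprod (Fin.cons (sprod fun j : Fin (m + 1) => α (Fin.castLE (by omega) j))
      fun j : Fin m => α ⟨m + 1 + j.1, by omega⟩) = sprod α := by
  rw [← WithOne.coe_inj, WithOne.coe_sprod, WithOne.coe_sprod, List.ofFn_succ, List.prod_cons]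
  simp only [Fin.cons_zero, Fin.cons_succ, WithOne.coe_sprod, ← List.prod_append]
  rw [List.ofFn_congr (by omega : 2 * m + 1 = m + 1 + m) (fun k => (α k : WithOne S)),
    List.ofFn_add (n := m + 1)]
  rfl

lemma sprod_comp_perm {S : Type*} [CommSemigroup S] {m : ℕ} (α : Fin (m + 1) → S)
    (σ : Equiv.Perm (Fin (m + 1))) : sprod (α ∘ σ) = sprod α := by
  rw [← WithOne.coe_inj, WithOne.coe_sprod, WithOne.coe_sprod, List.prod_ofFn, List.prod_ofFn]
  exact Equiv.prod_comp σ fun k => (α k : WithOne S)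

lemma gdelta_eq_sum_perm {ι : Type*} [DecidableEq ι] {r : ℕ} (A B : Fin r → ι) :
    gdelta A B = ∑ σ : Equiv.Perm (Fin r), if A ∘ σ = B then (Equiv.Perm.sign σ : ℤ) else 0 := by
  refine sum_congr rfl fun σ _ => ?_
  rw [prod_boole, mul_ite, mul_one, mul_zero]
  simp only [mem_univ, true_implies, funext_iff, Function.comp_apply]

lemma sum_gdelta_mul_eq_sum_perm {ι R : Type*} [Fintype ι] [DecidableEq ι] [CommRing R] {r : ℕ}
    (A : Fin r → ι) (f : (Fin r → ι) → R) :
    ∑ B : Fin r → ι, (gdelta A B : R) * f B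
      = ∑ σ : Equiv.Perm (Fin r), (Equiv.Perm.sign σ : ℤ) * f (A ∘ σ) := by
  simp only [gdelta_eq_sum_perm, Int.cast_sum, sum_mul, apply_ite (Int.cast : ℤ → R), ite_mul,
    Int.cast_zero, zero_mul]
  rw [sum_comm]
  exact sum_congr rfl fun σ _ => by rw [sum_ite_eq]; simp

/-- The contraction `C^c_{A_1...A_n} C^D_{c A_{n+1}...A_{2n-1}}` before antisymmetrization. -/
def jacobiTerm {ι R : Type*} [Fintype ι] [CommRing R] {m : ℕ}
    (C : (Fin (m + 1) → ι) → ι → R) (A : Fin (2 * m + 1) → ι) (D : ι) : R :=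
  ∑ c : ι, C (fun j => A (Fin.castLE (by omega) j)) c *
    C (Fin.cons c fun j : Fin m => A ⟨m + 1 + j.1, by omega⟩) D

lemma gjc_iff_sum_perm {ι R : Type*} [Fintype ι] [DecidableEq ι] [CommRing R] {m : ℕ}
    (C : (Fin (m + 1) → ι) → ι → R) :
    GJC C ↔ ∀ (A : Fin (2 * m + 1) → ι) (D : ι),
      ∑ σ : Equiv.Perm (Fin (2 * m + 1)), (Equiv.Perm.sign σ : ℤ) * jacobiTerm C (A ∘ σ) D = 0 := by
  simp only [GJC, mul_assoc, ← mul_sum, sum_gdelta_mul_eq_sum_perm]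
  rfl

/-- The `S`-expanded structure constants `K^γ_{α_1...α_n} C^c_{A_1...A_n}`,
with `K^γ_{α_1...α_n} = 1` if `α_1 ⋯ α_n = γ` in `S` and `0` otherwise. -/
def expandedConstants {ι S R : Type*} [DecidableEq S] [Semigroup S] [CommRing R] {m : ℕ}
    (C : (Fin (m + 1) → ι) → ι → R) (As : Fin (m + 1) → ι × S) (Cg : ι × S) : R :=
  (if sprod (fun k => (As k).2) = Cg.2 then (1 : R) else 0) * C (fun k => (As k).1) Cg.1

lemma jacobiTerm_expandedConstants {ι S R : Type*} [Fintype ι] [Fintype S] [DecidableEq S]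
    [Semigroup S] [CommRing R] {m : ℕ} (C : (Fin (m + 1) → ι) → ι → R)
    (A : Fin (2 * m + 1) → ι × S) (D : ι × S) :
    jacobiTerm (expandedConstants C) A D =
      (if sprod (fun k => (A k).2) = D.2 then (1 : R) else 0) *
        jacobiTerm C (fun k => (A k).1) D.1 := by
  simp only [jacobiTerm, expandedConstants, Fintype.sum_prod_type, mul_sum]
  refine sum_congr rfl fun c _ => ?_
  simp only [← Function.comp_def Prod.fst, ← Function.comp_def Prod.snd, Fin.comp_cons, ite_mul,
    one_mul, zero_mul, sum_ite_eq, mem_univ, if_true]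
  simp only [Function.comp_def]
  rw [sprod_cons_sprod fun k => (A k).2, mul_ite, mul_zero]

/-- the S-expanded structure constants
`C^{(c,γ)}_{(A_1,α_1)...(A_n,α_n)} = K^γ_{α_1...α_n} C^c_{A_1...A_n}`
satisfy the generalized Jacobi condition whenever the original ones do. -/
theorem expanded_structure_constants_GJC {ι S R : Type*} [Fintype ι] [DecidableEq ι]
    [Fintype S] [DecidableEq S] [CommSemigroup S] [CommRing R] (m : ℕ)
    (C : (Fin (m + 1) → ι) → ι → R) (hC : GJC C) :
    GJC (fun (As : Fin (m + 1) → ι × S) (Cg : ι × S) =>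
      (if sprod (fun k => (As k).2) = Cg.2 then (1 : R) else 0) *
        C (fun k => (As k).1) Cg.1) := by
  change GJC (expandedConstants C)
  rw [gjc_iff_sum_perm] at hC ⊢
  intro A D
  have hK (σ : Equiv.Perm (Fin (2 * m + 1))) :
      sprod (fun k => (A (σ k)).2) = sprod fun k => (A k).2 :=
    sprod_comp_perm (fun k => (A k).2) σ
  calc _ = (if sprod (fun k => (A k).2) = D.2 then (1 : R) else 0) *
        ∑ σ : Equiv.Perm (Fin (2 * m + 1)),
          (Equiv.Perm.sign σ : ℤ) * jacobiTerm C ((fun k => (A k).1) ∘ σ) D.1 := by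
        simp only [jacobiTerm_expandedConstants, Function.comp_apply, hK, mul_sum]
        exact sum_congr rfl fun σ _ => mul_left_comm _ _ _
    _ = 0 := by rw [hC, mul_zero]
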